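/- arXiv:1406.0881 — 8 statements merged into one kernel-verified Lean document; each statement's English description precedes it below -/
import Mathlib

section
/- Let s be a nonzero real number, q = exp(-s^2), and let α be a complex number with α·conj(α) = 1/(1-q^2). Define operators on functions f: ℂ → ℂ by (B f)(x) = α·(exp(-2isx)·f(x) - exp(-isx)·f(x+is)) and (B† f)(x) = conj(α)·(exp(2isx)·f(x) - exp(is(x+is))·f(x+is)). Then for every function f: ℂ → ℂ and every x ∈ ℂ, B(B† f)(x) - q^2 · B†(B f)(x) = f(x); that is, the q-mutator [B, B†]_q := B B† - q^2 B† B equals the identity operator. -/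
open Complex

set_option maxHeartbeats 1000000 in
/-- Macfarlane's coordinate realization of the q-deformed boson operators
`B = α (e^{-2isx} - e^{-isx} e^{is∂})`, `B† = conj α (e^{2isx} - e^{is∂} e^{isx})`,
where `e^{is∂}` acts as the shift `f(x) ↦ f(x+is)`, satisfies the q-mutator
relation `B B† - q² B† B = 1` with `q = exp(-s²)` and `α conj α = 1/(1-q²)`. -/
theorem qMutator_macfarlane
    (s : ℝ) (hs : s ≠ 0) (q : ℝ) (hq : q = Real.exp (-s ^ 2))
    (α : ℂ) (hα : α * (starRingEnd ℂ) α = 1 / (1 - (q : ℂ) ^ 2))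
    (B Bd : (ℂ → ℂ) → (ℂ → ℂ))
    (hB : ∀ (f : ℂ → ℂ) (x : ℂ),
      B f x = α * (Complex.exp (-2 * I * s * x) * f x
        - Complex.exp (-I * s * x) * f (x + I * s)))
    (hBd : ∀ (f : ℂ → ℂ) (x : ℂ),
      Bd f x = (starRingEnd ℂ) α * (Complex.exp (2 * I * s * x) * f x
        - Complex.exp (I * s * (x + I * s)) * f (x + I * s)))
    (f : ℂ → ℂ) (x : ℂ) :
    B (Bd f) x - (q : ℂ) ^ 2 * Bd (B f) x = f x := by
  set u := Complex.exp (I * s * x) with hu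
  set v := Complex.exp ((s : ℂ) ^ 2) with hv
  have hu0 : u ≠ 0 := Complex.exp_ne_zero _
  have hv0 : v ≠ 0 := Complex.exp_ne_zero _
  have key : ∀ m n : ℤ, Complex.exp ((m : ℂ) * (I * s * x) + (n : ℂ) * (s : ℂ) ^ 2)
      = u ^ m * v ^ n := by
    intro m n
    rw [Complex.exp_add, Complex.exp_int_mul, Complex.exp_int_mul]
  have hqv : (q : ℂ) ^ 2 = v ^ (-2 : ℤ) := by
    rw [hq, Complex.ofReal_exp, hv]
    rw [← Complex.exp_int_mul, ← Complex.exp_nat_mul]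
    push_cast
    ring_nf
  have hqlt : q ^ 2 < 1 := by
    rw [hq, ← Real.exp_nat_mul]
    apply Real.exp_lt_one_iff.mpr
    have : s ^ 2 > 0 := by positivity
    push_cast
    nlinarith
  have hne : (1 : ℂ) - (q : ℂ) ^ 2 ≠ 0 := by
    have : ((1 - q ^ 2 : ℝ) : ℂ) ≠ 0 := by
      exact_mod_cast ne_of_gt (by linarith : (0:ℝ) < 1 - q ^ 2)
    push_cast at this
    exact this
  have hne' : v ^ 2 - 1 ≠ 0 := by
    intro h
    apply hne
    have hv2 : v ^ 2 = 1 := by linear_combination h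
    have h2 : v ^ (-2:ℤ) = (v ^ 2)⁻¹ := by
      rw [zpow_neg]
      norm_cast
    rw [hqv, h2, hv2]
    simp
  have h1 : Complex.exp (-2 * I * (s:ℂ) * x) = u ^ (-2:ℤ) * v ^ (0:ℤ) := by
    rw [show (-2 * I * (s:ℂ) * x) = ((-2:ℤ):ℂ) * (I * s * x) + ((0:ℤ):ℂ) * (s:ℂ)^2 by push_cast; ring]
    exact key _ _
  have h2 : Complex.exp (2 * I * (s:ℂ) * x) = u ^ (2:ℤ) * v ^ (0:ℤ) := by
    rw [show (2 * I * (s:ℂ) * x) = ((2:ℤ):ℂ) * (I * s * x) + ((0:ℤ):ℂ) * (s:ℂ)^2 by push_cast; ring]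
    exact key _ _
  have h3 : Complex.exp (I * (s:ℂ) * (x + I * s)) = u ^ (1:ℤ) * v ^ (-1:ℤ) := by
    rw [show (I * (s:ℂ) * (x + I * s)) = ((1:ℤ):ℂ) * (I * s * x) + ((-1:ℤ):ℂ) * (s:ℂ)^2 by
      push_cast; linear_combination (s:ℂ)^2 * Complex.I_sq]
    exact key _ _
  have h4 : Complex.exp (-I * (s:ℂ) * x) = u ^ (-1:ℤ) * v ^ (0:ℤ) := by
    rw [show (-I * (s:ℂ) * x) = ((-1:ℤ):ℂ) * (I * s * x) + ((0:ℤ):ℂ) * (s:ℂ)^2 by push_cast; ring]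
    exact key _ _
  have h5 : Complex.exp (2 * I * (s:ℂ) * (x + I * s)) = u ^ (2:ℤ) * v ^ (-2:ℤ) := by
    rw [show (2 * I * (s:ℂ) * (x + I * s)) = ((2:ℤ):ℂ) * (I * s * x) + ((-2:ℤ):ℂ) * (s:ℂ)^2 by
      push_cast; linear_combination 2 * (s:ℂ)^2 * Complex.I_sq]
    exact key _ _
  have h6 : Complex.exp (I * (s:ℂ) * (x + I * s + I * s)) = u ^ (1:ℤ) * v ^ (-2:ℤ) := by
    rw [show (I * (s:ℂ) * (x + I * s + I * s)) = ((1:ℤ):ℂ) * (I * s * x) + ((-2:ℤ):ℂ) * (s:ℂ)^2 by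
      push_cast; linear_combination 2 * (s:ℂ)^2 * Complex.I_sq]
    exact key _ _
  have h7 : Complex.exp (-2 * I * (s:ℂ) * (x + I * s)) = u ^ (-2:ℤ) * v ^ (2:ℤ) := by
    rw [show (-2 * I * (s:ℂ) * (x + I * s)) = ((-2:ℤ):ℂ) * (I * s * x) + ((2:ℤ):ℂ) * (s:ℂ)^2 by
      push_cast; linear_combination (-2) * (s:ℂ)^2 * Complex.I_sq]
    exact key _ _
  have h8 : Complex.exp (-I * (s:ℂ) * (x + I * s)) = u ^ (-1:ℤ) * v ^ (1:ℤ) := by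
    rw [show (-I * (s:ℂ) * (x + I * s)) = ((-1:ℤ):ℂ) * (I * s * x) + ((1:ℤ):ℂ) * (s:ℂ)^2 by
      push_cast; linear_combination (-1) * (s:ℂ)^2 * Complex.I_sq]
    exact key _ _
  rw [hqv] at hα ⊢
  rw [hB, hBd, hBd, hBd, hB, hB, h1, h2, h3, h4, h5, h6, h7, h8]
  have hα' : α * (starRingEnd ℂ) α * (v ^ 2 - 1) = v ^ 2 := by
    have e : (1:ℂ) - v ^ (-2:ℤ) = (v ^ 2 - 1) / v ^ 2 := by
      rw [show v ^ (-2:ℤ) = (v ^ 2)⁻¹ by rw [zpow_neg]; norm_cast,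
        eq_div_iff (pow_ne_zero 2 hv0), sub_mul, one_mul,
        inv_mul_cancel₀ (pow_ne_zero 2 hv0)]
    rw [hα, e, one_div_div]
    exact div_mul_cancel₀ _ hne'
  have hu' : u * u⁻¹ = 1 := mul_inv_cancel₀ hu0
  have hv' : v * v⁻¹ = 1 := mul_inv_cancel₀ hv0
  simp only [zpow_neg, zpow_one, zpow_zero, zpow_two, mul_one]
  ring_nf
  linear_combination
    (f x * v⁻¹ ^ 2) * hα'
    + (-(α * (starRingEnd ℂ) α) * v * v⁻¹ ^ 3 * f (x + I * (s:ℂ) * 2)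
      + (α * (starRingEnd ℂ) α) * v⁻¹ ^ 2 * f (x + I * (s:ℂ) * 2)
      + (α * (starRingEnd ℂ) α) * u⁻¹ * v ^ 2 * v⁻¹ ^ 3 * f (x + I * (s:ℂ))
      - (α * (starRingEnd ℂ) α) * u⁻¹ * v⁻¹ * f (x + I * (s:ℂ))
      + (α * (starRingEnd ℂ) α) * u * u⁻¹ * f x
      - (α * (starRingEnd ℂ) α) * u * u⁻¹ * v⁻¹ ^ 2 * f x
      + (α * (starRingEnd ℂ) α) * f x
      - (α * (starRingEnd ℂ) α) * v⁻¹ ^ 2 * f x) * hu'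
    + (-(α * (starRingEnd ℂ) α) * v⁻¹ ^ 2 * f (x + I * (s:ℂ) * 2)
      + (α * (starRingEnd ℂ) α) * u⁻¹ * v * v⁻¹ ^ 2 * f (x + I * (s:ℂ))
      + (α * (starRingEnd ℂ) α) * u⁻¹ * v⁻¹ * f (x + I * (s:ℂ))
      + f x * v * v⁻¹ + f x
      - (α * (starRingEnd ℂ) α) * f x * v * v⁻¹
      - (α * (starRingEnd ℂ) α) * f x) * hv'
end

section
/- Let s be a nonzero real number, q = exp(-s^2), and let α be a complex number with α·conj(α) = 1/(1-q^2). Let β: ℂ → ℂ be a function satisfying the difference equation β(x+is) = β(x) + is for all x ∈ ℂ. Define operators on functions f: ℂ → ℂ by (𝔅 f)(x) = α·(exp(-2isβ(x))·f(x) - exp(-isβ(x))·f(x+is)) and (𝔅† f)(x) = conj(α)·(exp(2isβ(x))·f(x) - exp(isβ(x+is))·f(x+is)). Then for every function f: ℂ → ℂ and every x ∈ ℂ, 𝔅(𝔅† f)(x) - q^2 · 𝔅†(𝔅 f)(x) = f(x); that is, the generalized deformed operators satisfy the q-mutator relation [𝔅, 𝔅†]_q = 1. -/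
open Complex

/-- The generalized q-deformed boson operators
`𝔅 = α (e^{-2isβ(x)} - e^{-isβ(x)} e^{is∂})`,
`𝔅† = conj α (e^{2isβ(x)} - e^{is∂} e^{isβ(x)})`,
where `e^{is∂}` acts as the shift `f(x) ↦ f(x+is)` and the deformation
function `β` satisfies the difference equation `β(x+is) = β(x) + is`,
satisfy the q-mutator relation `𝔅 𝔅† - q² 𝔅† 𝔅 = 1` with `q = exp(-s²)`
and `α conj α = 1/(1-q²)`. -/
theorem qMutator_generalized
    (s : ℝ) (hs : s ≠ 0) (q : ℝ) (hq : q = Real.exp (-s ^ 2))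
    (α : ℂ) (hα : α * (starRingEnd ℂ) α = 1 / (1 - (q : ℂ) ^ 2))
    (β : ℂ → ℂ) (hβ : ∀ x : ℂ, β (x + I * s) = β x + I * s)
    (𝔅 𝔅d : (ℂ → ℂ) → (ℂ → ℂ))
    (h𝔅 : ∀ (f : ℂ → ℂ) (x : ℂ),
      𝔅 f x = α * (Complex.exp (-2 * I * s * β x) * f x
        - Complex.exp (-I * s * β x) * f (x + I * s)))
    (h𝔅d : ∀ (f : ℂ → ℂ) (x : ℂ),
      𝔅d f x = (starRingEnd ℂ) α * (Complex.exp (2 * I * s * β x) * f x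
        - Complex.exp (I * s * β (x + I * s)) * f (x + I * s)))
    (f : ℂ → ℂ) (x : ℂ) :
    𝔅 (𝔅d f) x - (q : ℂ) ^ 2 * 𝔅d (𝔅 f) x = f x := by
  have hq1 : q < 1 := by
    rw [hq, Real.exp_lt_one_iff]
    have h2 : (0:ℝ) < s ^ 2 := by positivity
    linarith
  have hq0 : (0:ℝ) < q := hq ▸ Real.exp_pos _
  have hq2 : (1:ℂ) - (q:ℂ)^2 ≠ 0 := by
    have h : (1:ℝ) - q^2 ≠ 0 := by nlinarith
    have := Complex.ofReal_ne_zero.mpr h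
    push_cast at this
    exact this
  have hαq : α * (starRingEnd ℂ) α * (1 - (q:ℂ)^2) = 1 := by
    rw [hα]; field_simp
  set c := I * (s:ℂ) * β x with hc
  set d := I * (s:ℂ) * (I * s) with hd
  have hdq : (q:ℂ) = Complex.exp d := by
    rw [hq, hd]
    rw [show (I * (s:ℂ) * (I * s)) = ((-s^2 : ℝ) : ℂ) by push_cast; ring_nf; rw [I_sq]; ring]
    exact Complex.ofReal_exp _
  set D := Complex.exp d with hD
  have hb2 : β (x + I * s + I * s) = β x + I * s + I * s := by rw [hβ, hβ]
  simp only [h𝔅, h𝔅d, hβ, hb2]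
  have e1 : -2 * I * (s:ℂ) * β x = -(c + c) := by rw [hc]; ring
  have e2 : -I * (s:ℂ) * β x = -c := by rw [hc]; ring
  have e3 : I * (s:ℂ) * (β x + I * s) = c + d := by rw [hc, hd]; ring
  have e4 : (2:ℂ) * I * s * β x = c + c := by rw [hc]; ring
  have e5 : (2:ℂ) * I * s * (β x + I * s) = c + c + (d + d) := by rw [hc, hd]; ring
  have e6 : I * (s:ℂ) * (β x + I * s + I * s) = c + (d + d) := by rw [hc, hd]; ring
  have e7 : -2 * I * (s:ℂ) * (β x + I * s) = -(c + c + (d + d)) := by rw [hc, hd]; ring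
  have e8 : -I * (s:ℂ) * (β x + I * s) = -(c + d) := by rw [hc, hd]; ring
  rw [e1, e2, e3, e4, e5, e6, e7, e8]
  have h1 : Complex.exp (-(c + c)) * Complex.exp (c + c) = 1 := by
    rw [← Complex.exp_add, neg_add_cancel, Complex.exp_zero]
  have h2 : Complex.exp (-c) * Complex.exp (c + c + (d + d))
      = D * D * (Complex.exp (c + c) * Complex.exp (-c)) := by
    rw [hD]; simp only [← Complex.exp_add]; congr 1; ring
  have h3 : D * D * (Complex.exp (c + d) * Complex.exp (-(c + c + (d + d))))
      = Complex.exp (-(c + c)) * Complex.exp (c + d) := by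
    rw [hD]; simp only [← Complex.exp_add]; congr 1; ring
  have h4 : Complex.exp (-c) * Complex.exp (c + (d + d))
      = D * D * (Complex.exp (c + d) * Complex.exp (-(c + d))) := by
    rw [hD]; simp only [← Complex.exp_add]; congr 1; ring
  rw [hdq] at hαq ⊢
  set A := α * (starRingEnd ℂ) α with hA
  linear_combination (A * (1 - D * D) * f x) * h1 + f x * hαq
    + (-(A * f (x + I * s))) * h2 + (A * f (x + I * s)) * h3
    + (A * f (x + I * s + I * s)) * h4
end

section
/- Let p₁, p₀ be polynomials with complex coefficients and set S = p₁² - 2·p₁' - 4·p₀, where p₁' denotes the formal derivative of p₁. If the degree of S is odd, then there is no polynomial z with complex coefficients satisfying the Riccati equation z' = z² + p₁·z + p₀ (as an identity of polynomials, z' being the formal derivative of z). -/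
open Polynomial

/-- **Lemma 3.1 (non-existence part).** For polynomial coefficients `p₁, p₀`
over `ℂ` with leading coefficient `p₂ = 1`, set `S = p₁² - 2 p₁' - 4 p₀`.
If the degree of `S` is odd then the Riccati equation `z' = z² + p₁ z + p₀`
has no polynomial solution. -/
theorem riccati_no_polynomial_solution_of_odd_degree
    (p₁ p₀ S : Polynomial ℂ)
    (hS : S = p₁ ^ 2 - 2 * derivative p₁ - 4 * p₀)
    (hodd : Odd S.natDegree) :
    ¬ ∃ z : Polynomial ℂ, derivative z = z ^ 2 + p₁ * z + p₀ := by
  rintro ⟨z, hz⟩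
  set w : Polynomial ℂ := 2 * z + p₁ with hw
  have hp₀ : p₀ = derivative z - z ^ 2 - p₁ * z := by
    rw [hz]; ring
  have hSw : S = w ^ 2 - 2 * derivative w := by
    rw [hS, hp₀, hw]
    simp only [derivative_add, derivative_mul, derivative_ofNat, derivative_one]
    ring
  by_cases h0 : w.natDegree = 0
  · obtain ⟨c, hc⟩ := natDegree_eq_zero.mp h0
    rw [hSw, ← hc, derivative_C, mul_zero, sub_zero, ← C_pow] at hodd
    simp [natDegree_C] at hodd
  · have hlt : (2 * derivative w).natDegree < (w ^ 2).natDegree := by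
      have h1 : (2 * derivative w).natDegree ≤ (derivative w).natDegree := by
        calc (2 * derivative w).natDegree ≤ (2 : Polynomial ℂ).natDegree +
              (derivative w).natDegree := natDegree_mul_le
          _ = (derivative w).natDegree := by simp
      have h2 : (derivative w).natDegree < w.natDegree := natDegree_derivative_lt h0
      have h3 : (w ^ 2).natDegree = 2 * w.natDegree := natDegree_pow w 2
      omega
    have : S.natDegree = 2 * w.natDegree := by
      rw [hSw, natDegree_sub_eq_left_of_natDegree_lt hlt, natDegree_pow]
    rw [this] at hodd
    exact (Nat.not_odd_iff_even.mpr ⟨w.natDegree, (two_mul _)⟩) hodd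
end

section
/- Let s be a nonzero real number, δ, λ ∈ ℂ, let β: ℝ → ℂ be differentiable with antiderivative Φ (Φ' = β), and let ξ: ℝ → ℂ be twice differentiable. Define Λ(x) = ξ(x)·exp(i·x/s + δ·Φ(x)). Then Λ satisfies the eigenvalue equation Λ''(x) - (2i/s)·(1 - i·s·β(x))·Λ'(x) - (2i/s)·(β(x) - (3is/2)·β(x)²)·Λ(x) = (2√2·λ/s)·Λ(x) for all x ∈ ℝ if and only if ξ satisfies ξ''(x) + 2(δ-1)·β(x)·ξ'(x) + [ (1 - 2√2·s·λ)/s² - (4i/s)·β(x) + (δ+1)(δ-3)·β(x)² + δ·β'(x) ]·ξ(x) = 0 for all x ∈ ℝ. -/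
/-!
Write `Λ = ξ e^g` with `g' = γ := i/s + δβ`. Then `Λ' = (ξ' + γξ) e^g` and
`Λ'' = (ξ'' + 2γξ' + (γ² + γ')ξ) e^g`, so after using `i² = -1` the residual of the eigenvalue
equation is `e^g` times the left-hand side of the `ξ`-equation; since `e^g` never vanishes, the
two equations are equivalent.
-/

open Complex

section MulCexp

variable {𝕜 : Type*} [NontriviallyNormedField 𝕜] [NormedAlgebra 𝕜 ℂ] {ξ g γ : 𝕜 → ℂ}

theorem hasDerivAt_mul_cexp {x : 𝕜} (hξ : DifferentiableAt 𝕜 ξ x) (hg : HasDerivAt g (γ x) x) :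
    HasDerivAt (fun y => ξ y * cexp (g y)) ((deriv ξ x + γ x * ξ x) * cexp (g x)) x :=
  (hξ.hasDerivAt.mul hg.cexp).congr_deriv (by ring)

theorem deriv_mul_cexp (hξ : Differentiable 𝕜 ξ) (hg : ∀ x, HasDerivAt g (γ x) x) :
    deriv (fun y => ξ y * cexp (g y)) = fun x => (deriv ξ x + γ x * ξ x) * cexp (g x) :=
  funext fun x => (hasDerivAt_mul_cexp (hξ x) (hg x)).deriv

theorem deriv_deriv_mul_cexp (hξ : Differentiable 𝕜 ξ) (hξ' : Differentiable 𝕜 (deriv ξ))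
    (hg : ∀ x, HasDerivAt g (γ x) x) (hγ : Differentiable 𝕜 γ) (x : 𝕜) :
    deriv (deriv fun y => ξ y * cexp (g y)) x =
      (deriv (deriv ξ) x + 2 * γ x * deriv ξ x + (γ x ^ 2 + deriv γ x) * ξ x) * cexp (g x) := by
  have hξ₁ : HasDerivAt (fun y => deriv ξ y + γ y * ξ y)
      (deriv (deriv ξ) x + (deriv γ x * ξ x + γ x * deriv ξ x)) x :=
    (hξ' x).hasDerivAt.add ((hγ x).hasDerivAt.mul (hξ x).hasDerivAt)
  rw [deriv_mul_cexp hξ hg, (hasDerivAt_mul_cexp hξ₁.differentiableAt (hg x)).deriv, hξ₁.deriv]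
  ring

end MulCexp

theorem gauge_residual_identity {s : ℂ} (hs : s ≠ 0) (δ r lam b b' a₀ a₁ a₂ E : ℂ) :
    (a₂ + 2 * (I / s + δ * b) * a₁ + ((I / s + δ * b) ^ 2 + δ * b') * a₀) * E
      - (2 * I / s) * (1 - I * s * b) * ((a₁ + (I / s + δ * b) * a₀) * E)
      - (2 * I / s) * (b - (3 * I * s / 2) * b ^ 2) * (a₀ * E) - (2 * r * lam / s) * (a₀ * E) =
    (a₂ + 2 * (δ - 1) * b * a₁
        + ((1 - 2 * r * s * lam) / s ^ 2 - (4 * I / s) * b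
            + (δ + 1) * (δ - 3) * b ^ 2 + δ * b') * a₀) * E := by
  field_simp
  -- the two sides differ by a multiple of `I ^ 2 + 1`
  linear_combination
    E * (2 * b * a₁ * s ^ 2 + a₀ * (-1 + 2 * I * b * s + 2 * δ * b ^ 2 * s ^ 2 + 3 * b ^ 2 * s ^ 2))
      * I_sq

/-- The substitution `Λ(x) = ξ(x) exp(ix/s + δ∫β)` transforms the
coherent-state eigenvalue equation
`Λ'' - (2i/s)(1 - isβ)Λ' - (2i/s)(β - (3is/2)β²)Λ = (2√2 λ/s)Λ`
of the weak q-deformed oscillator into the second-order equation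
`ξ'' + 2(δ-1)βξ' + [(1-2√2 s λ)/s² - (4i/s)β + (δ+1)(δ-3)β² + δβ']ξ = 0`. -/
theorem eigenvalue_equation_iff_xi_equation
    (s : ℝ) (hs : s ≠ 0) (δ lam : ℂ)
    (β Φ ξ Λ : ℝ → ℂ)
    (hβ : Differentiable ℝ β)
    (hΦ : ∀ x : ℝ, HasDerivAt Φ (β x) x)
    (hξ : Differentiable ℝ ξ) (hξ' : Differentiable ℝ (deriv ξ))
    (hΛ : ∀ x : ℝ, Λ x = ξ x * Complex.exp (I * x / s + δ * Φ x)) :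
    (∀ x : ℝ,
      deriv (deriv Λ) x - (2 * I / s) * (1 - I * s * β x) * deriv Λ x
        - (2 * I / s) * (β x - (3 * I * s / 2) * β x ^ 2) * Λ x
      = (2 * Real.sqrt 2 * lam / s) * Λ x) ↔
    (∀ x : ℝ,
      deriv (deriv ξ) x + 2 * (δ - 1) * β x * deriv ξ x
        + ((1 - 2 * Real.sqrt 2 * s * lam) / s ^ 2 - (4 * I / s) * β x
            + (δ + 1) * (δ - 3) * β x ^ 2 + δ * deriv β x) * ξ x
      = 0) := by
  have hg (x : ℝ) : HasDerivAt (fun x : ℝ => I * x / s + δ * Φ x) (I / s + δ * β x) x := by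
    simpa [Pi.add_def] using
      ((ofRealCLM.hasDerivAt.const_mul I).div_const (s : ℂ)).add ((hΦ x).const_mul δ)
  have hγ (x : ℝ) : HasDerivAt (fun x => I / s + δ * β x) (δ * deriv β x) x :=
    ((hβ x).hasDerivAt.const_mul δ).const_add _
  obtain rfl : Λ = fun x => ξ x * cexp (I * x / s + δ * Φ x) := funext hΛ
  refine forall_congr' fun x => ?_
  rw [deriv_deriv_mul_cexp hξ hξ' hg (fun x => (hγ x).differentiableAt), deriv_mul_cexp hξ hg,
    (hγ x).deriv, ← sub_eq_zero, gauge_residual_identity (ofReal_ne_zero.mpr hs), mul_eq_zero,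
    or_iff_left (exp_ne_zero _)]
end

section
/- Let s be a nonzero real number, δ, λ ∈ ℂ, let β: ℝ → ℂ be differentiable with antiderivative Φ (Φ' = β), let z: ℝ → ℂ be differentiable with antiderivative Z (Z' = z), and define Λ(x) = exp(i·x/s + δ·Φ(x) - Z(x)). Then Λ satisfies the eigenvalue equation Λ''(x) - (2i/s)·(1 - i·s·β(x))·Λ'(x) - (2i/s)·(β(x) - (3is/2)·β(x)²)·Λ(x) = (2√2·λ/s)·Λ(x) for all x ∈ ℝ if and only if z satisfies the Riccati equation z'(x) = z(x)² - 2(δ-1)·β(x)·z(x) + (1 - 2√2·s·λ)/s² - (4i/s)·β(x) + (δ+1)(δ-3)·β(x)² + δ·β'(x) for all x ∈ ℝ. -/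
open Complex

/-!
Substituting `Λ = exp f` into a linear second-order equation
`Λ'' - p Λ' - q Λ = r Λ` and dividing by the nowhere-vanishing `Λ` turns it into the
Riccati equation `g' + g² - p g - q = r` for the logarithmic derivative `g = f'`.
Here `g = i/s + δβ - z`, and expanding this equation is a polynomial identity in
`β, β', z, z'` over `ℂ[1/s]`.
-/

theorem deriv_deriv_cexp_comp {f g : ℝ → ℂ} (hf : ∀ x, HasDerivAt f (g x) x)
    (hg : Differentiable ℝ g) (x : ℝ) :
    deriv (deriv fun y => exp (f y)) x = exp (f x) * (deriv g x + g x ^ 2) := by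
  have hderiv : deriv (fun y => exp (f y)) = fun y => exp (f y) * g y :=
    funext fun y => (hf y).cexp.deriv
  rw [hderiv]
  exact ((hf x).cexp.mul (hg x).hasDerivAt).deriv.trans (by ring)

theorem linear_ode_iff_riccati_of_eq_cexp {Λ f g : ℝ → ℂ} (hΛ : ∀ x, Λ x = exp (f x))
    (hf : ∀ x, HasDerivAt f (g x) x) (hg : Differentiable ℝ g) (x : ℝ) (p q r : ℂ) :
    deriv (deriv Λ) x - p * deriv Λ x - q * Λ x = r * Λ x ↔
      deriv g x + g x ^ 2 - p * g x - q = r := by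
  obtain rfl : Λ = fun y => exp (f y) := funext hΛ
  beta_reduce
  rw [deriv_deriv_cexp_comp hf hg, (hf x).cexp.deriv]
  have hfactor : exp (f x) * (deriv g x + g x ^ 2) - p * (exp (f x) * g x) - q * exp (f x)
      - r * exp (f x) = exp (f x) * (deriv g x + g x ^ 2 - p * g x - q - r) := by ring
  rw [← sub_eq_zero, hfactor, mul_eq_zero, or_iff_right (exp_ne_zero _), sub_eq_zero]

theorem riccati_expansion_iff {s : ℂ} (hs : s ≠ 0) (δ c lam b b' w w' : ℂ) :
    (δ * b' - w') + (I / s + δ * b - w) ^ 2 - (2 * I / s) * (1 - I * s * b) * (I / s + δ * b - w)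
        - (2 * I / s) * (b - (3 * I * s / 2) * b ^ 2) = 2 * c * lam / s ↔
      w' = w ^ 2 - 2 * (δ - 1) * b * w + (1 - 2 * c * s * lam) / s ^ 2 - (4 * I / s) * b
        + (δ + 1) * (δ - 3) * b ^ 2 + δ * b' := by
  have hexpand : (δ * b' - w') + (I / s + δ * b - w) ^ 2
      - (2 * I / s) * (1 - I * s * b) * (I / s + δ * b - w)
      - (2 * I / s) * (b - (3 * I * s / 2) * b ^ 2) - 2 * c * lam / s
      = w ^ 2 - 2 * (δ - 1) * b * w + (1 - 2 * c * s * lam) / s ^ 2 - (4 * I / s) * b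
        + (δ + 1) * (δ - 3) * b ^ 2 + δ * b' - w' := by
    field_simp
    ring_nf
    simp only [I_sq, I_pow_three]
    ring
  rw [← sub_eq_zero, hexpand, sub_eq_zero, eq_comm]

/-- Writing `Λ(x) = exp(ix/s + δ∫β - ∫z)` reduces the coherent-state
eigenvalue equation
`Λ'' - (2i/s)(1 - isβ)Λ' - (2i/s)(β - (3is/2)β²)Λ = (2√2 λ/s)Λ`
of the weak q-deformed oscillator to the Riccati equation
`z' = z² - 2(δ-1)βz + (1-2√2 s λ)/s² - (4i/s)β + (δ+1)(δ-3)β² + δβ'`. -/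
theorem eigenvalue_equation_iff_riccati
    (s : ℝ) (hs : s ≠ 0) (δ lam : ℂ)
    (β Φ z Z Λ : ℝ → ℂ)
    (hβ : Differentiable ℝ β)
    (hΦ : ∀ x : ℝ, HasDerivAt Φ (β x) x)
    (hz : Differentiable ℝ z)
    (hZ : ∀ x : ℝ, HasDerivAt Z (z x) x)
    (hΛ : ∀ x : ℝ, Λ x = Complex.exp (I * x / s + δ * Φ x - Z x)) :
    (∀ x : ℝ,
      deriv (deriv Λ) x - (2 * I / s) * (1 - I * s * β x) * deriv Λ x
        - (2 * I / s) * (β x - (3 * I * s / 2) * β x ^ 2) * Λ x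
      = (2 * Real.sqrt 2 * lam / s) * Λ x) ↔
    (∀ x : ℝ,
      deriv z x = z x ^ 2 - 2 * (δ - 1) * β x * z x
        + (1 - 2 * Real.sqrt 2 * s * lam) / s ^ 2 - (4 * I / s) * β x
        + (δ + 1) * (δ - 3) * β x ^ 2 + δ * deriv β x) := by
  have hexponent : ∀ x : ℝ, HasDerivAt (fun y : ℝ => I * y / s + δ * Φ y - Z y)
      (I / s + δ * β x - z x) x := fun x =>
    ((((hasDerivAt_id x).ofReal_comp.const_mul I).div_const (s : ℂ)).add
      ((hΦ x).const_mul δ)).sub (hZ x) |>.congr_deriv (by simp)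
  have hlogDeriv : ∀ x : ℝ, HasDerivAt (fun y : ℝ => I / s + δ * β y - z y)
      (δ * deriv β x - deriv z x) x := fun x =>
    (((hβ x).hasDerivAt.const_mul δ).const_add (I / (s : ℂ))).sub (hz x).hasDerivAt
  refine forall_congr' fun x => ?_
  rw [linear_ode_iff_riccati_of_eq_cexp hΛ hexponent
    (fun x => (hlogDeriv x).differentiableAt) x, (hlogDeriv x).deriv]
  exact riccati_expansion_iff (ofReal_ne_zero.mpr hs) _ _ _ _ _ _ _
end

section
/- Let λ₀, λ₁ ∈ ℂ, set κ = λ₀² + √2·λ₁ + 1/2, let b: ℝ → ℂ be differentiable with antiderivative B (B' = b), set β(x) = x + b(x), and let Λ₀(x) = exp(i·√2·λ₀·x - x²/2 - B(x)). Then the function Λ₁(x) = i·(κ·x + b(x)/2 + i·√2·λ₀·x² + 2·i·√2·λ₀·B(x))·Λ₀(x) satisfies the first-order correction equation Λ₁'(x) + (β(x) - i·√2·λ₀)·Λ₁(x) = -(i/2)·Λ₀''(x) + i·β(x)·Λ₀'(x) + i·(√2·λ₁ + (3/2)·β(x)²)·Λ₀(x) for all x ∈ ℝ. -/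
/-!
With `c = i√2 λ₀`, `Λ₀` solves the homogeneous equation `Λ' + (β - c) Λ = 0`, so for
`Λ₁ = i P Λ₀` the left-hand side collapses to `i P' Λ₀ = i (κ + b'/2 + 2cβ) Λ₀`.
On the right, `Λ₀' = (c - β) Λ₀` and `Λ₀'' = ((c - β)² - β') Λ₀` reduce everything to a
polynomial identity in `c`, `β`, `b'`, which closes because `c² = -2 λ₀²`.
-/

open Complex

theorem hasDerivAt_ofReal_sq (x : ℝ) : HasDerivAt (fun t : ℝ => (t : ℂ) ^ 2) (2 * x) x := by
  simpa using (hasDerivAt_pow 2 (x : ℂ)).comp_ofReal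

theorem hasDerivAt_mul_sub_sq_div_two_sub (c : ℂ) {B b : ℝ → ℂ} {x : ℝ}
    (hB : HasDerivAt B (b x) x) :
    HasDerivAt (fun t : ℝ => c * t - (t : ℂ) ^ 2 / 2 - B t) (c - x - b x) x :=
  (((ofRealCLM.hasDerivAt.const_mul c).fun_sub ((hasDerivAt_ofReal_sq x).div_const 2)).fun_sub
    hB).congr_deriv (by simp)

theorem hasDerivAt_first_order_amplitude (κ c : ℂ) {B b : ℝ → ℂ} {x : ℝ} {b' : ℂ}
    (hb : HasDerivAt b b' x) (hB : HasDerivAt B (b x) x) :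
    HasDerivAt (fun t : ℝ => κ * t + b t / 2 + c * (t : ℂ) ^ 2 + 2 * c * B t)
      (κ + b' / 2 + 2 * c * (x + b x)) x :=
  ((((ofRealCLM.hasDerivAt.const_mul κ).fun_add (hb.div_const 2)).fun_add
    ((hasDerivAt_ofReal_sq x).const_mul c)).fun_add (hB.const_mul (2 * c))).congr_deriv
    (by simp; ring)

theorem deriv_deriv_eq_of_hasDerivAt_mul_self {𝕜 𝔸 : Type*} [NontriviallyNormedField 𝕜]
    [NormedRing 𝔸] [NormedAlgebra 𝕜 𝔸] {f g : 𝕜 → 𝔸} (hf : ∀ y, HasDerivAt f (g y * f y) y)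
    {x : 𝕜} {g' : 𝔸} (hg : HasDerivAt g g' x) :
    deriv (deriv f) x = (g' + g x ^ 2) * f x := by
  have hdf : deriv f = fun y => g y * f y := funext fun y => (hf y).deriv
  rw [hdf, (hg.fun_mul (hf x)).deriv, sq, add_mul, mul_assoc]

theorem sq_I_mul_sqrt_two_mul (z : ℂ) : (I * Real.sqrt 2 * z) ^ 2 = -2 * z ^ 2 := by
  have hs : ((Real.sqrt 2 : ℝ) : ℂ) ^ 2 = 2 := by
    norm_cast
    exact Real.sq_sqrt zero_le_two
  rw [mul_pow, mul_pow, I_sq, hs]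
  ring

/-- The first-order correction
`Λ₁(x) = i(κx + b(x)/2 + i√2 λ₀ x² + 2i√2 λ₀ ∫b)·Λ₀(x)`, with
`κ = λ₀² + √2 λ₁ + 1/2`, solves the inhomogeneous first-order equation
`Λ₁' + (β - i√2 λ₀)Λ₁ = -(i/2)Λ₀'' + iβΛ₀' + i(√2 λ₁ + (3/2)β²)Λ₀`
of the perturbative expansion of weak q-deformed coherent states, where
`β(x) = x + b(x)` and `Λ₀(x) = exp(i√2 λ₀ x - x²/2 - ∫b)`. -/
theorem first_order_correction_equation
    (lam₀ lam₁ : ℂ) (κ : ℂ)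
    (hκ : κ = lam₀ ^ 2 + Real.sqrt 2 * lam₁ + 1 / 2)
    (b B : ℝ → ℂ)
    (hb : Differentiable ℝ b)
    (hB : ∀ x : ℝ, HasDerivAt B (b x) x)
    (β : ℝ → ℂ) (hβ : ∀ x : ℝ, β x = x + b x)
    (Λ₀ Λ₁ : ℝ → ℂ)
    (hΛ₀ : ∀ x : ℝ,
      Λ₀ x = Complex.exp (I * Real.sqrt 2 * lam₀ * x - x ^ 2 / 2 - B x))
    (hΛ₁ : ∀ x : ℝ,
      Λ₁ x = I * (κ * x + b x / 2 + I * Real.sqrt 2 * lam₀ * x ^ 2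
        + 2 * I * Real.sqrt 2 * lam₀ * B x) * Λ₀ x) :
    ∀ x : ℝ,
      deriv Λ₁ x + (β x - I * Real.sqrt 2 * lam₀) * Λ₁ x
        = -(I / 2) * deriv (deriv Λ₀) x + I * β x * deriv Λ₀ x
          + I * (Real.sqrt 2 * lam₁ + (3 / 2) * β x ^ 2) * Λ₀ x := by
  intro x
  set c : ℂ := I * Real.sqrt 2 * lam₀
  have hΛ₀' : ∀ y, HasDerivAt Λ₀ ((c - β y) * Λ₀ y) y := fun y => by
    rw [funext hΛ₀, hβ, ← sub_sub, mul_comm]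
    exact (hasDerivAt_mul_sub_sq_div_two_sub c (hB y)).cexp
  have hb' : HasDerivAt b (deriv b x) x := (hb x).hasDerivAt
  have hβ' : HasDerivAt (fun y => c - β y) (-(1 + deriv b x)) x := by
    simp only [hβ]
    exact ((ofRealCLM.hasDerivAt.add hb').const_sub c).congr_deriv (by simp)
  have hΛ₁' : HasDerivAt Λ₁ (I * (κ + deriv b x / 2 + 2 * c * β x) * Λ₀ x
      + I * (κ * x + b x / 2 + c * (x : ℂ) ^ 2 + 2 * c * B x) * ((c - β x) * Λ₀ x)) x := by
    have hΛ₁fun : Λ₁ = fun y => I * (κ * y + b y / 2 + c * (y : ℂ) ^ 2 + 2 * c * B y) * Λ₀ y :=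
      funext fun y => by rw [hΛ₁ y]; ring
    rw [hΛ₁fun]
    exact (((hasDerivAt_first_order_amplitude κ c hb' (hB x)).const_mul I).fun_mul
      (hΛ₀' x)).congr_deriv (by rw [hβ])
  rw [hΛ₁'.deriv, deriv_deriv_eq_of_hasDerivAt_mul_self hΛ₀' hβ', (hΛ₀' x).deriv, hΛ₁ x, hκ]
  linear_combination (I / 2 * Λ₀ x) * sq_I_mul_sqrt_two_mul lam₀
end

section
/- Let s > 0 and let t, g be real numbers. Then ∑_{n∈ℤ} exp(-n²·s² - 2n·g - n·s²·t/π) = (√π/s)·exp((s·t/(2π) + g/s)²)·ϑ₃(t/2 + π·g/s² | iπ/s²), where ϑ₃(z|τ) = ∑_{m∈ℤ} exp(iπτ·m² + 2i·m·z) is the elliptic Jacobi theta function (both series converge absolutely). -/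
open Complex Real

/-- The theta-function identity behind the weight function of the resolution
of unity: for `s > 0` and real `t`, `g`,
`∑ₙ exp(-n²s² - 2ng - ns²t/π) = (√π/s)·exp((st/(2π) + g/s)²)·ϑ₃(t/2 + πg/s² | iπ/s²)`,
where `ϑ₃(z|τ) = ∑ₘ exp(iπτm² + 2imz)` is the elliptic Jacobi theta function;
both series converge absolutely. -/
theorem weight_function_theta_identity
    (s : ℝ) (hs : 0 < s) (t g : ℝ)
    (τ z : ℂ)
    (hτ : τ = I * π / (s : ℂ) ^ 2)
    (hz : z = (t : ℂ) / 2 + π * g / (s : ℂ) ^ 2) :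
    Summable (fun n : ℤ =>
      Complex.exp (-(n : ℂ) ^ 2 * s ^ 2 - 2 * n * g - n * s ^ 2 * t / π)) ∧
    Summable (fun m : ℤ =>
      Complex.exp (I * π * τ * (m : ℂ) ^ 2 + 2 * I * m * z)) ∧
    (∑' n : ℤ,
        Complex.exp (-(n : ℂ) ^ 2 * s ^ 2 - 2 * n * g - n * s ^ 2 * t / π))
      = (Real.sqrt π / s)
        * Complex.exp (((s * t / (2 * π) + g / s : ℝ) : ℂ) ^ 2)
        * ∑' m : ℤ, Complex.exp (I * π * τ * (m : ℂ) ^ 2 + 2 * I * m * z) := by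
  have hπ : (0:ℝ) < π := Real.pi_pos
  have hπc : (π : ℂ) ≠ 0 := by exact_mod_cast hπ.ne'
  have hsc : (s : ℂ) ≠ 0 := by exact_mod_cast hs.ne'
  set a : ℂ := ((s ^ 2 / π : ℝ) : ℂ) with ha_def
  have ha : 0 < a.re := by
    simp only [ha_def, ofReal_re]
    positivity
  have ha' : a = (s : ℂ) ^ 2 / π := by push_cast [ha_def]; ring
  set b : ℂ := -(g : ℂ) / π - (s : ℂ) ^ 2 * t / (2 * π ^ 2) with hb_def
  -- LHS exponent identity
  have h1 : ∀ n : ℤ, -(n : ℂ) ^ 2 * s ^ 2 - 2 * n * g - n * s ^ 2 * t / π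
      = -π * a * n ^ 2 + 2 * π * b * n := by
    intro n
    rw [ha', hb_def]
    field_simp [hπc]
    ring
  -- RHS exponent identity
  have h2 : ∀ m : ℤ, -π / a * (m + I * b) ^ 2
      = I * π * τ * (m : ℂ) ^ 2 + 2 * I * m * z
        + ((s * t / (2 * π) + g / s : ℝ) : ℂ) ^ 2 := by
    intro m
    rw [ha', hb_def, hτ, hz]
    push_cast
    field_simp [hπc, hsc]
    ring_nf
    simp only [I_sq]
    ring
  -- summability of LHS
  have hsum1 : Summable (fun n : ℤ =>
      Complex.exp (-(n : ℂ) ^ 2 * s ^ 2 - 2 * n * g - n * s ^ 2 * t / π)) := by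
    have h : Summable (fun n : ℤ => jacobiTheta₂_term n (-I * b) (I * a)) :=
      (summable_jacobiTheta₂_term_iff _ _).mpr (by
        simp only [mul_im, I_re, I_im, zero_mul, one_mul, zero_add, ha_def, ofReal_re]
        positivity)
    refine h.congr fun n => ?_
    rw [jacobiTheta₂_term, h1 n]
    congr 1
    ring_nf
    simp only [I_sq]
    ring
  -- summability of RHS
  have hsum2 : Summable (fun m : ℤ =>
      Complex.exp (I * π * τ * (m : ℂ) ^ 2 + 2 * I * m * z)) := by
    have h : Summable (fun m : ℤ => jacobiTheta₂_term m (z / π) τ) :=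
      (summable_jacobiTheta₂_term_iff _ _).mpr (by
        rw [hτ]
        have : (I * (π:ℂ) / (s:ℂ)^2) = (((π / s^2 : ℝ)):ℂ) * I := by push_cast; ring
        rw [this]
        simp only [mul_im, ofReal_re, ofReal_im, I_im, I_re, mul_one, mul_zero, add_zero]
        positivity)
    refine h.congr fun m => ?_
    rw [jacobiTheta₂_term]
    congr 1
    field_simp [hπc]
    ring
  refine ⟨hsum1, hsum2, ?_⟩
  calc (∑' n : ℤ, Complex.exp (-(n : ℂ) ^ 2 * s ^ 2 - 2 * n * g - n * s ^ 2 * t / π))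
      = ∑' n : ℤ, Complex.exp (-π * a * n ^ 2 + 2 * π * b * n) :=
        tsum_congr fun n => by rw [h1]
    _ = 1 / a ^ (1 / 2 : ℂ) * ∑' n : ℤ, Complex.exp (-π / a * (n + I * b) ^ 2) :=
        Complex.tsum_exp_neg_quadratic ha b
    _ = 1 / a ^ (1 / 2 : ℂ) * ∑' m : ℤ,
          (Complex.exp (((s * t / (2 * π) + g / s : ℝ) : ℂ) ^ 2)
            * Complex.exp (I * π * τ * (m : ℂ) ^ 2 + 2 * I * m * z)) := by
        congr 1
        refine tsum_congr fun m => ?_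
        rw [← Complex.exp_add, h2 m]
        ring_nf
    _ = _ := by
        rw [tsum_mul_left]
        have hpow : a ^ (1 / 2 : ℂ) = ((s / Real.sqrt π : ℝ) : ℂ) := by
          have h12 : (1/2 : ℂ) = ((1/2 : ℝ) : ℂ) := by norm_num
          rw [ha_def, h12, ← Complex.ofReal_cpow (by positivity)]
          norm_cast
          rw [← Real.sqrt_eq_rpow, Real.sqrt_div (sq_nonneg s), Real.sqrt_sq hs.le]
        rw [hpow]
        have hπs : Real.sqrt π ≠ 0 := by positivity
        push_cast
        field_simp
end

section
/- Let s > 0, γ ∈ ℂ with real part γ_Re, let b: ℝ → ℝ be a continuous 2π-periodic real-valued function with ∫₀^{2π} b(t')dt' = 0, let B(t) = ∫₀^t b(t')dt', and define Λ(t) = exp(-γ·t/(2π) - s²·t²/(16π²) + (i·s/(4π))·B(t)). Then |Λ|² is integrable on ℝ and ∫_{-∞}^{∞} |Λ(t)|² dt = ∫_{-π}^{π} σ(t)·|Λ(t)|² dt, where σ(t) = ∑_{n∈ℤ} exp(-2n·γ_Re - n·s²·t/(2π) - n²·s²/2) is a convergent positive series defining a positive weight function. -/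
/-!
Since `|Λ(t)|² = exp(-γ_Re t/π - s²t²/(8π²))` is a Gaussian (the phase `exp(isB(t)/(4π))`
has modulus one), expanding the square gives the quasi-periodicity `|Λ(t + 2πn)|² = σₙ(t) |Λ(t)|²`, where `σₙ(t)`
is the `n`-th term of `σ(t)`. Cutting `ℝ` into the translates `(-π, π] + 2πn` of a fundamental
domain of `2πℤ` and exchanging sum and integral (Tonelli, everything being nonnegative) turns
`∫_ℝ |Λ|²` into `∫_{-π}^{π} ∑ₙ |Λ(t + 2πn)|² dt = ∫_{-π}^{π} σ |Λ|²`. The series `σ(t)` and the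
integral converge because their terms are Gaussian in `n`, resp. in `t`.
-/

open Complex Real MeasureTheory Set
open scoped ENNReal

theorem lintegral_eq_setLIntegral_Ioc_tsum_add_int_mul {p : ℝ} (hp : 0 < p) (a : ℝ)
    {f : ℝ → ℝ≥0∞} (hf : Measurable f) :
    ∫⁻ x, f x = ∫⁻ x in Ioc a (a + p), ∑' n : ℤ, f (x + n * p) := by
  let e : ℤ ≃ AddSubgroup.zmultiples p := Equiv.ofBijective (fun n => ⟨n • p, n, rfl⟩)
    ⟨fun m n h => (zsmul_left_strictMono hp).injective (congrArg Subtype.val h),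
      by rintro ⟨_, n, rfl⟩; exact ⟨n, rfl⟩⟩
  refine ((isAddFundamentalDomain_Ioc hp a).lintegral_eq_tsum'' f).trans ?_
  rw [← e.tsum_eq, lintegral_tsum (f := fun (n : ℤ) x => f (x + n * p))
    fun n => (hf.comp (measurable_add_const _)).aemeasurable]
  refine tsum_congr fun n => setLIntegral_congr_fun measurableSet_Ioc fun x _ => ?_
  simp [e, AddSubgroup.vadd_def, zsmul_eq_mul, add_comm]

theorem integral_eq_intervalIntegral_tsum_add_int_mul {p : ℝ} (hp : 0 < p) (a : ℝ)
    {f : ℝ → ℝ} (hf : Measurable f) (hf0 : 0 ≤ f)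
    (hsum : ∀ x, Summable fun n : ℤ => f (x + n * p)) :
    ∫ x, f x = ∫ x in a..a + p, ∑' n : ℤ, f (x + n * p) := by
  have hofReal (x : ℝ) : ∑' n : ℤ, ENNReal.ofReal (f (x + n * p))
      = ENNReal.ofReal (∑' n : ℤ, f (x + n * p)) :=
    (ENNReal.ofReal_tsum_of_nonneg (fun _ => hf0 _) (hsum x)).symm
  have hmeas : Measurable fun x => ∑' n : ℤ, ENNReal.ofReal (f (x + n * p)) :=
    Measurable.tsum fun n => (hf.comp (measurable_add_const _)).ennreal_ofReal
  calc ∫ x, f x = (∫⁻ x, ENNReal.ofReal (f x)).toReal :=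
        integral_eq_lintegral_of_nonneg_ae (ae_of_all _ hf0) hf.aestronglyMeasurable
    _ = (∫⁻ x in Ioc a (a + p), ∑' n : ℤ, ENNReal.ofReal (f (x + n * p))).toReal := by
        rw [lintegral_eq_setLIntegral_Ioc_tsum_add_int_mul hp a hf.ennreal_ofReal]
    _ = ∫ x in Ioc a (a + p), (∑' n : ℤ, ENNReal.ofReal (f (x + n * p))).toReal :=
        (integral_toReal hmeas.aemeasurable
          (ae_of_all _ fun x => hofReal x ▸ ENNReal.ofReal_lt_top)).symm
    _ = ∫ x in a..a + p, ∑' n : ℤ, f (x + n * p) := by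
        simp_rw [intervalIntegral.integral_of_le (le_add_of_nonneg_right hp.le), hofReal,
          ENNReal.toReal_ofReal (tsum_nonneg fun _ => hf0 _)]

theorem summable_exp_mul_sub_mul_sq (α : ℝ) {β : ℝ} (hβ : 0 < β) :
    Summable fun n : ℤ => rexp (α * n - β * n ^ 2) := by
  refine (summable_pow_mul_jacobiTheta₂_term_bound (|α| / (2 * π)) (div_pos hβ pi_pos) 0)
    |>.of_nonneg_of_le (fun _ => (exp_pos _).le) fun n => ?_
  have hαn : α * n ≤ |α| * |(n : ℝ)| := abs_mul α n ▸ le_abs_self _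
  rw [pow_zero, one_mul, exp_le_exp, Int.cast_abs]
  field_simp
  linarith

theorem integrable_exp_mul_sub_mul_sq (α : ℝ) {β : ℝ} (hβ : 0 < β) :
    Integrable fun x : ℝ => rexp (α * x - β * x ^ 2) := by
  refine (integrable_cexp_quadratic (b := β) (by simpa) α 0).norm.congr
    (ae_of_all _ fun x => ?_)
  simp only [Complex.norm_exp]
  congr 1
  simp only [← ofReal_pow, neg_mul, add_zero, add_re, neg_re, mul_re, ofReal_re, ofReal_im,
    mul_zero, sub_zero]
  ring

noncomputable def coherentDensity (s : ℝ) (γ : ℂ) (t : ℝ) : ℝ :=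
  rexp (-(γ.re / π) * t - s ^ 2 / (8 * π ^ 2) * t ^ 2)

theorem norm_sq_cexp_eq_coherentDensity (s : ℝ) (γ : ℂ) (t β : ℝ) :
    ‖Complex.exp (-γ * t / (2 * π) - s ^ 2 * t ^ 2 / (16 * π ^ 2) + (I * s / (4 * π)) * β)‖ ^ 2
      = coherentDensity s γ t := by
  rw [Complex.norm_exp, ← Real.exp_nat_mul, coherentDensity]
  congr 1
  simp only [Nat.cast_ofNat, neg_mul, ← ofReal_pow, add_re, sub_re, div_re, neg_re, mul_re,
    ofReal_re, ofReal_im, mul_zero, sub_zero, re_ofNat, im_ofNat, map_mul, normSq_ofNat,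
    normSq_ofReal, neg_im, mul_im, zero_add, zero_mul, add_zero, zero_div, I_re, I_im, sub_self,
    one_mul]
  field_simp
  ring

theorem coherentDensity_add_int_mul_two_pi (s : ℝ) (γ : ℂ) (t : ℝ) (n : ℤ) :
    coherentDensity s γ (t + n * (2 * π))
      = rexp (-2 * n * γ.re - n * s ^ 2 * t / (2 * π) - n ^ 2 * s ^ 2 / 2)
        * coherentDensity s γ t := by
  rw [coherentDensity, coherentDensity, ← Real.exp_add]
  congr 1
  field_simp
  ring

theorem integrable_coherentDensity {s : ℝ} (hs : s ≠ 0) (γ : ℂ) :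
    Integrable (coherentDensity s γ) :=
  integrable_exp_mul_sub_mul_sq _ (by positivity)

theorem continuous_coherentDensity (s : ℝ) (γ : ℂ) : Continuous (coherentDensity s γ) := by
  unfold coherentDensity; fun_prop

theorem resolution_of_unity_general
    (s : ℝ) (hs : 0 < s) (γ : ℂ)
    (B : ℝ → ℝ)
    (Λ : ℝ → ℂ)
    (hΛ : ∀ t : ℝ, Λ t = Complex.exp (-γ * t / (2 * π)
      - s ^ 2 * t ^ 2 / (16 * π ^ 2) + (I * s / (4 * π)) * B t))
    (σ : ℝ → ℝ)
    (hσ : ∀ t : ℝ, σ t = ∑' n : ℤ,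
      Real.exp (-2 * n * γ.re - n * s ^ 2 * t / (2 * π) - n ^ 2 * s ^ 2 / 2)) :
    (∀ t : ℝ, Summable (fun n : ℤ =>
      Real.exp (-2 * n * γ.re - n * s ^ 2 * t / (2 * π) - n ^ 2 * s ^ 2 / 2))) ∧
    (∀ t : ℝ, 0 < σ t) ∧
    Integrable (fun t : ℝ => ‖Λ t‖ ^ 2) ∧
    (∫ t : ℝ, ‖Λ t‖ ^ 2)
      = ∫ t in (-π : ℝ)..π, σ t * ‖Λ t‖ ^ 2 := by
  have hsum (t : ℝ) : Summable fun n : ℤ =>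
      rexp (-2 * n * γ.re - n * s ^ 2 * t / (2 * π) - n ^ 2 * s ^ 2 / 2) :=
    (summable_exp_mul_sub_mul_sq (-2 * γ.re - s ^ 2 * t / (2 * π))
      (by positivity : 0 < s ^ 2 / 2)).congr fun n => by ring_nf
  have hΛ_norm (t : ℝ) : ‖Λ t‖ ^ 2 = coherentDensity s γ t := by
    rw [hΛ, norm_sq_cexp_eq_coherentDensity]
  simp only [hΛ_norm]
  refine ⟨hsum, fun t => hσ t ▸ (hsum t).tsum_pos (fun _ => (exp_pos _).le) 0 (exp_pos _),
    integrable_coherentDensity hs.ne' γ, ?_⟩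
  rw [integral_eq_intervalIntegral_tsum_add_int_mul two_pi_pos (-π)
    (continuous_coherentDensity s γ).measurable (fun t => (exp_pos _).le)
    fun t => by simpa only [coherentDensity_add_int_mul_two_pi] using (hsum t).mul_right _]
  simp_rw [coherentDensity_add_int_mul_two_pi, tsum_mul_right, ← hσ]
  rw [show -π + 2 * π = π by ring]

/-- Resolution of unity for the weak q-deformed coherent states: with
`Λ(t) = exp(-γt/(2π) - s²t²/(16π²) + (is/(4π))B(t))`, `b` a real-valued
continuous `2π`-periodic function of zero mean and `B = ∫₀ᵗ b`, the function
`|Λ|²` is integrable on `ℝ`, the series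
`σ(t) = ∑ₙ exp(-2nγ_Re - ns²t/(2π) - n²s²/2)` converges to a positive weight
function, and `∫_ℝ |Λ(t)|² dt = ∫_{-π}^{π} σ(t)|Λ(t)|² dt`. -/
theorem resolution_of_unity
    (s : ℝ) (hs : 0 < s) (γ : ℂ)
    (b : ℝ → ℝ) (hb : Continuous b)
    (hper : ∀ t : ℝ, b (t + 2 * π) = b t)
    (hmean : (∫ t' in (0 : ℝ)..(2 * π), b t') = 0)
    (B : ℝ → ℝ) (hB : ∀ t : ℝ, B t = ∫ t' in (0 : ℝ)..t, b t')
    (Λ : ℝ → ℂ)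
    (hΛ : ∀ t : ℝ, Λ t = Complex.exp (-γ * t / (2 * π)
      - s ^ 2 * t ^ 2 / (16 * π ^ 2) + (I * s / (4 * π)) * B t))
    (σ : ℝ → ℝ)
    (hσ : ∀ t : ℝ, σ t = ∑' n : ℤ,
      Real.exp (-2 * n * γ.re - n * s ^ 2 * t / (2 * π) - n ^ 2 * s ^ 2 / 2)) :
    (∀ t : ℝ, Summable (fun n : ℤ =>
      Real.exp (-2 * n * γ.re - n * s ^ 2 * t / (2 * π) - n ^ 2 * s ^ 2 / 2))) ∧
    (∀ t : ℝ, 0 < σ t) ∧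
    Integrable (fun t : ℝ => ‖Λ t‖ ^ 2) ∧
    (∫ t : ℝ, ‖Λ t‖ ^ 2)
      = ∫ t in (-π : ℝ)..π, σ t * ‖Λ t‖ ^ 2 :=
  resolution_of_unity_general s hs γ B Λ hΛ σ hσ
end
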